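/- arXiv:1507.07361 — 2 statements merged into one kernel-verified Lean document; each statement's English description precedes it below -/
import Mathlib

section
/- Let M : [0,∞) → (0,∞) be continuous and increasing with M(0) = m₀ > 0, suppose t ↦ M(t)/t is decreasing on (0,∞), let M̂(t) = ∫₀ᵗ M(s) ds, and let θ > 4. Then (1/2)·M̂(t) − (1/θ)·M(t)·t ≥ ((θ−4)/(4θ))·m₀·t for all t ≥ 0. -/
theorem stmt_2 (M : ℝ → ℝ) (m₀ θ : ℝ)
    (hcont : ContinuousOn M (Set.Ici 0))
    (hpos : ∀ t : ℝ, 0 ≤ t → 0 < M t)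
    (hmono : MonotoneOn M (Set.Ici 0))
    (hM0 : M 0 = m₀) (hm₀ : 0 < m₀)
    (hdec : ∀ s t : ℝ, 0 < s → s < t → M t / t ≤ M s / s)
    (hθ : 4 < θ) :
    ∀ t : ℝ, 0 ≤ t →
      (1/2) * (∫ s in (0:ℝ)..t, M s) - (1/θ) * M t * t ≥ ((θ - 4)/(4*θ)) * m₀ * t := by
  intro t ht
  rcases eq_or_lt_of_le ht with h0 | htpos
  · simp [← h0]
  have hθ0 : (0:ℝ) < θ := by linarith
  have hMt := hpos t ht
  have hMint : IntervalIntegrable M MeasureTheory.volume 0 t := by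
    apply ContinuousOn.intervalIntegrable
    apply hcont.mono
    rw [Set.uIcc_of_le ht]
    exact fun x hx => hx.1
  have key : ∀ s ∈ Set.Icc (0:ℝ) t, s * (M t / t) ≤ M s := by
    intro s hs
    rcases eq_or_lt_of_le hs.1 with h | hs0
    · rw [← h]; simpa using (hpos 0 le_rfl).le
    rcases eq_or_lt_of_le hs.2 with h | hst
    · subst h
      rw [mul_div_cancel₀ _ (ne_of_gt hs0)]
    · have hd := hdec s t hs0 hst
      have : s * (M t / t) ≤ s * (M s / s) :=
        mul_le_mul_of_nonneg_left hd hs0.le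
      calc s * (M t / t) ≤ s * (M s / s) := this
        _ = M s := by field_simp
  have hint2 : (∫ s in (0:ℝ)..t, s * (M t / t)) = M t * t / 2 := by
    rw [intervalIntegral.integral_mul_const, integral_id]
    field_simp
    ring
  have hle : M t * t / 2 ≤ ∫ s in (0:ℝ)..t, M s := by
    rw [← hint2]
    exact intervalIntegral.integral_mono_on ht
      ((continuous_id.mul continuous_const).intervalIntegrable 0 t) hMint key
  have hMm : m₀ ≤ M t := hM0 ▸ hmono Set.self_mem_Ici ht ht
  have hrw : (θ - 4)/(4*θ) = 1/4 - 1/θ := by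
    field_simp
  have h14 : (0:ℝ) < 1/4 - 1/θ := by
    rw [sub_pos, div_lt_div_iff₀ hθ0 (by norm_num)]
    linarith
  rw [hrw, ge_iff_le]
  have hprod : 0 ≤ (1/4 - 1/θ) * (M t * t - m₀ * t) :=
    mul_nonneg h14.le (by nlinarith)
  nlinarith [hle]
end

section
/- Let V : [r,R]² → ℝ² be continuous, V = (V₁,V₂), with r < R, such that V₁(r,s) > 0 and V₂(t,r) > 0 for all t,s ∈ [r,R], and V₁(R,s) < 0 and V₂(t,R) < 0 for all t,s ∈ [r,R]. Then there exists (t₀,s₀) ∈ (r,R)² with V(t₀,s₀) = (0,0). -/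
/-!
Suppose `V` has no zero in the open square. The boundary conditions rule out zeros on the
boundary too, so `V` does not vanish on the closed square, which is convex and hence simply
connected; lifting through the covering map `exp : ℂ → ℂ \ {0}` gives `V` a continuous polar
angle `φ`. Along the bottom and top sides `sin φ` keeps its sign, so `φ` crosses no multiple of
`π`; along the left and right sides `cos φ` keeps its sign, so `φ` crosses no odd multiple of
`π / 2`. The signs at the corners say in which quarter-turn `φ` lies there, and following these
constraints once around the boundary forces `φ` to gain a full turn, which is absurd.
-/

open Set Real

open scoped Classical in
theorem Convex.exists_continuousOn_exp_eq {E : Type*} [AddCommGroup E] [Module ℝ E]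
    [TopologicalSpace E] [IsTopologicalAddGroup E] [ContinuousSMul ℝ E] [LocallyConvexSpace ℝ E]
    {S : Set E} (hS : Convex ℝ S) {f : E → ℂ} (hf : ContinuousOn f S) (hf0 : ∀ p ∈ S, f p ≠ 0) :
    ∃ θ : E → ℂ, ContinuousOn θ S ∧ ∀ p ∈ S, Complex.exp (θ p) = f p := by
  rcases S.eq_empty_or_nonempty with rfl | ⟨a, ha⟩
  · exact ⟨0, continuousOn_empty _, fun _ => False.elim⟩
  have := hS.contractibleSpace ⟨a, ha⟩
  have := hS.locallyPathConnectedSpace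
  obtain ⟨θ, ⟨-, hθ⟩, -⟩ := Complex.isCoveringMapOn_exp.existsUnique_continuousMap_lifts
    ⟨S.domRestrict f, hf.domRestrict⟩ (a₀ := ⟨a, ha⟩) (Complex.exp_log (hf0 a ha))
    fun p => hf0 p p.2
  refine ⟨fun p => if hp : p ∈ S then θ ⟨p, hp⟩ else 0, ?_, fun p hp => ?_⟩
  · rw [continuousOn_iff_continuous_domRestrict]
    convert θ.continuous with p
    simp
  · simpa [hp] using congrFun hθ ⟨p, hp⟩

theorem Convex.exists_continuousOn_polar {E : Type*} [AddCommGroup E] [Module ℝ E]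
    [TopologicalSpace E] [IsTopologicalAddGroup E] [ContinuousSMul ℝ E] [LocallyConvexSpace ℝ E]
    {S : Set E} (hS : Convex ℝ S) {V₁ V₂ : E → ℝ}
    (hV : ContinuousOn (fun p => (V₁ p, V₂ p)) S) (hV0 : ∀ p ∈ S, (V₁ p, V₂ p) ≠ 0) :
    ∃ ρ φ : E → ℝ, ContinuousOn φ S ∧
      ∀ p ∈ S, 0 < ρ p ∧ V₁ p = ρ p * cos (φ p) ∧ V₂ p = ρ p * sin (φ p) := by
  let e := Complex.equivRealProdCLM.symm
  obtain ⟨θ, hθ, hexp⟩ := hS.exists_continuousOn_exp_eq (e.continuous.comp_continuousOn hV)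
    fun p hp => e.map_ne_zero_iff.2 (hV0 p hp)
  refine ⟨fun p => Real.exp (θ p).re, fun p => (θ p).im,
    Complex.continuous_im.comp_continuousOn hθ, fun p hp => ⟨Real.exp_pos _, ?_, ?_⟩⟩
  · simpa [e, Complex.exp_re] using (congrArg Complex.re (hexp p hp)).symm
  · simpa [e, Complex.exp_im] using (congrArg Complex.im (hexp p hp)).symm

namespace Real

theorem neg_one_zpow_floor_div_pi_mul_sin_nonneg (x : ℝ) : 0 ≤ (-1 : ℝ) ^ ⌊x / π⌋ * sin x := by
  set m := ⌊x / π⌋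
  have hm : (m : ℝ) * π ≤ x := (le_div_iff₀ pi_pos).1 (Int.floor_le _)
  have hm' : x < (m + 1) * π := (div_lt_iff₀ pi_pos).1 (Int.lt_floor_add_one _)
  have hsin : sin x = (-1) ^ m * sin (x - m * π) := by
    rw [← sin_add_int_mul_pi, sub_add_cancel]
  rw [hsin, ← mul_assoc, ← mul_zpow, neg_one_mul, neg_neg, one_zpow, one_mul]
  exact sin_nonneg_of_nonneg_of_le_pi (by linarith) (by linarith)

theorem floor_add_pi_div_two_div_pi_cases (x : ℝ) :
    (⌊(x + π / 2) / π⌋ = ⌊x / π⌋ ∧ 0 ≤ sin x * cos x) ∨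
      (⌊(x + π / 2) / π⌋ = ⌊x / π⌋ + 1 ∧ sin x * cos x ≤ 0) := by
  have hsin := neg_one_zpow_floor_div_pi_mul_sin_nonneg x
  have hcos := neg_one_zpow_floor_div_pi_mul_sin_nonneg (x + π / 2)
  rw [sin_add_pi_div_two] at hcos
  have hle : ⌊x / π⌋ ≤ ⌊(x + π / 2) / π⌋ :=
    Int.floor_le_floor (by gcongr; linarith [pi_pos])
  have hle' : ⌊(x + π / 2) / π⌋ ≤ ⌊x / π⌋ + 1 := by
    rw [← Int.floor_add_one]
    exact Int.floor_le_floor (by rw [div_add_one pi_ne_zero]; gcongr; linarith [pi_pos])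
  have hsq : (-1 : ℝ) ^ ⌊x / π⌋ * (-1) ^ ⌊x / π⌋ = 1 := by rw [← mul_zpow]; norm_num
  obtain h | h : ⌊(x + π / 2) / π⌋ = ⌊x / π⌋ ∨ ⌊(x + π / 2) / π⌋ = ⌊x / π⌋ + 1 := by omega
  · rw [h] at hcos
    exact .inl ⟨h, by nlinarith [mul_nonneg hsin hcos]⟩
  · rw [h, zpow_add_one₀ (by norm_num)] at hcos
    exact .inr ⟨h, by nlinarith [mul_nonneg hsin hcos]⟩

theorem floor_add_pi_div_two_div_pi_of_sin_mul_cos_pos {x : ℝ} (h : 0 < sin x * cos x) :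
    ⌊(x + π / 2) / π⌋ = ⌊x / π⌋ := by
  rcases floor_add_pi_div_two_div_pi_cases x with h' | h'
  exacts [h'.1, absurd h'.2 h.not_ge]

theorem floor_add_pi_div_two_div_pi_of_sin_mul_cos_neg {x : ℝ} (h : sin x * cos x < 0) :
    ⌊(x + π / 2) / π⌋ = ⌊x / π⌋ + 1 := by
  rcases floor_add_pi_div_two_div_pi_cases x with h' | h'
  exacts [absurd h'.2 h.not_ge, h'.1]

end Real

theorem IsPreconnected.floor_div_pi_eq {α : Type*} [TopologicalSpace α] {T : Set α}
    (hT : IsPreconnected T) {φ : α → ℝ} (hφ : ContinuousOn φ T) (hsin : ∀ t ∈ T, sin (φ t) ≠ 0)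
    {a b : α} (ha : a ∈ T) (hb : b ∈ T) : ⌊φ a / π⌋ = ⌊φ b / π⌋ := by
  suffices key : ∀ a ∈ T, ∀ b ∈ T, ⌊φ a / π⌋ ≤ ⌊φ b / π⌋ from
    le_antisymm (key a ha b hb) (key b hb a ha)
  intro a ha b hb
  by_contra! hlt
  have hb' : φ b < ⌊φ a / π⌋ * π := (div_lt_iff₀ pi_pos).1 (Int.floor_lt.1 hlt)
  have ha' : ⌊φ a / π⌋ * π ≤ φ a := (le_div_iff₀ pi_pos).1 (Int.floor_le _)
  obtain ⟨t, ht, hkt⟩ := hT.intermediate_value hb ha hφ ⟨hb'.le, ha'⟩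
  exact hsin t ht (hkt ▸ sin_int_mul_pi _)

theorem IsPreconnected.floor_add_pi_div_two_div_pi_eq {α : Type*} [TopologicalSpace α] {T : Set α}
    (hT : IsPreconnected T) {φ : α → ℝ} (hφ : ContinuousOn φ T) (hcos : ∀ t ∈ T, cos (φ t) ≠ 0)
    {a b : α} (ha : a ∈ T) (hb : b ∈ T) : ⌊(φ a + π / 2) / π⌋ = ⌊(φ b + π / 2) / π⌋ :=
  hT.floor_div_pi_eq (φ := fun t => φ t + π / 2) (hφ.add continuousOn_const)
    (fun t ht => by rw [sin_add_pi_div_two]; exact hcos t ht) ha hb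

theorem not_continuousOn_of_boundary_signs {r R : ℝ} (hrR : r ≤ R) {φ : ℝ × ℝ → ℝ}
    (hleft : ∀ s ∈ Icc r R, 0 < cos (φ (r, s))) (hright : ∀ s ∈ Icc r R, cos (φ (R, s)) < 0)
    (hbot : ∀ t ∈ Icc r R, 0 < sin (φ (t, r))) (htop : ∀ t ∈ Icc r R, sin (φ (t, R)) < 0) :
    ¬ContinuousOn φ (Icc r R ×ˢ Icc r R) := by
  intro hφ
  have hr : r ∈ Icc r R := left_mem_Icc.2 hrR
  have hR : R ∈ Icc r R := right_mem_Icc.2 hrR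
  have hrow : ∀ s ∈ Icc r R, ContinuousOn (fun t => φ (t, s)) (Icc r R) := fun s hs =>
    hφ.comp (by fun_prop : Continuous fun t : ℝ => (t, s)).continuousOn fun t ht => ⟨ht, hs⟩
  have hcol : ∀ t ∈ Icc r R, ContinuousOn (fun s => φ (t, s)) (Icc r R) := fun t ht =>
    hφ.comp (by fun_prop : Continuous fun s : ℝ => (t, s)).continuousOn fun s hs => ⟨ht, hs⟩
  have bot := isPreconnected_Icc.floor_div_pi_eq (hrow r hr) (fun t ht => (hbot t ht).ne') hr hR
  have top := isPreconnected_Icc.floor_div_pi_eq (hrow R hR) (fun t ht => (htop t ht).ne) hr hR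
  have left := isPreconnected_Icc.floor_add_pi_div_two_div_pi_eq (hcol r hr)
    (fun s hs => (hleft s hs).ne') hr hR
  have right := isPreconnected_Icc.floor_add_pi_div_two_div_pi_eq (hcol R hR)
    (fun s hs => (hright s hs).ne) hr hR
  have := floor_add_pi_div_two_div_pi_of_sin_mul_cos_pos (mul_pos (hbot r hr) (hleft r hr))
  have := floor_add_pi_div_two_div_pi_of_sin_mul_cos_neg
    (mul_neg_of_pos_of_neg (hbot R hR) (hright r hr))
  have := floor_add_pi_div_two_div_pi_of_sin_mul_cos_pos
    (mul_pos_of_neg_of_neg (htop R hR) (hright R hR))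
  have := floor_add_pi_div_two_div_pi_of_sin_mul_cos_neg
    (mul_neg_of_neg_of_pos (htop r hr) (hleft R hR))
  omega

theorem stmt_15 (r R : ℝ) (hrR : r < R) (V₁ V₂ : ℝ × ℝ → ℝ)
    (hcont : ContinuousOn (fun p => (V₁ p, V₂ p)) (Set.Icc r R ×ˢ Set.Icc r R))
    (h1r : ∀ s ∈ Set.Icc r R, 0 < V₁ (r, s))
    (h2r : ∀ t ∈ Set.Icc r R, 0 < V₂ (t, r))
    (h1R : ∀ s ∈ Set.Icc r R, V₁ (R, s) < 0)
    (h2R : ∀ t ∈ Set.Icc r R, V₂ (t, R) < 0) :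
    ∃ p : ℝ × ℝ, p.1 ∈ Set.Ioo r R ∧ p.2 ∈ Set.Ioo r R ∧ V₁ p = 0 ∧ V₂ p = 0 := by
  by_contra! hno
  have hV0 : ∀ p ∈ Icc r R ×ˢ Icc r R, (V₁ p, V₂ p) ≠ 0 := by
    rintro ⟨t, s⟩ ⟨ht, hs⟩ h
    obtain ⟨h₁, h₂⟩ := Prod.mk_eq_zero.1 h
    refine hno (t, s) ⟨?_, ?_⟩ ⟨?_, ?_⟩ h₁ h₂
    · exact ht.1.lt_of_ne (by rintro rfl; exact (h1r s hs).ne' h₁)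
    · exact ht.2.lt_of_ne (by rintro rfl; exact (h1R s hs).ne h₁)
    · exact hs.1.lt_of_ne (by rintro rfl; exact (h2r t ht).ne' h₂)
    · exact hs.2.lt_of_ne (by rintro rfl; exact (h2R t ht).ne h₂)
  obtain ⟨ρ, φ, hφ, hpolar⟩ :=
    ((convex_Icc r R).prod (convex_Icc r R)).exists_continuousOn_polar hcont hV0
  have hr : r ∈ Icc r R := left_mem_Icc.2 hrR.le
  have hR : R ∈ Icc r R := right_mem_Icc.2 hrR.le
  refine not_continuousOn_of_boundary_signs hrR.le (fun s hs => ?_) (fun s hs => ?_)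
    (fun t ht => ?_) (fun t ht => ?_) hφ
  · obtain ⟨hρ, h, -⟩ := hpolar (r, s) ⟨hr, hs⟩
    exact pos_of_mul_pos_right (h ▸ h1r s hs) hρ.le
  · obtain ⟨hρ, h, -⟩ := hpolar (R, s) ⟨hR, hs⟩
    exact neg_of_mul_neg_right (h ▸ h1R s hs) hρ.le
  · obtain ⟨hρ, -, h⟩ := hpolar (t, r) ⟨ht, hr⟩
    exact pos_of_mul_pos_right (h ▸ h2r t ht) hρ.le
  · obtain ⟨hρ, -, h⟩ := hpolar (t, R) ⟨ht, hR⟩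
    exact neg_of_mul_neg_right (h ▸ h2R t ht) hρ.le
end
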